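/- Two-point stationary states, coupled case, part (a): assume D^{(12)} ≠ 0. There exists a two-species distribution with v^{(1)}_{12} = v^{(2)}_{12} = 0. If D^{(11)} D^{(22)} ≠ (D^{(12)})², the unique such distribution is ρ_a, given by ρ^{(1)}(x_1) = ρ^{(1)}(x_2) = ρ^{(2)}(x_1) = ρ^{(2)}(x_2) = 1/2. If D^{(11)} D^{(22)} = (D^{(12)})² (so in particular D^{(22)} ≠ 0), then for every r ∈ [max(−1, −|D^{(22)}/D^{(12)}|), min(1, |D^{(22)}/D^{(12)}|)] the distribution ρ_{a_r} with ρ^{(1)}(x_1) = (1+r)/2, ρ^{(1)}(x_2) = (1−r)/2, ρ^{(2)}(x_1) = (1 − (D^{(12)}/D^{(22)}) r)/2, ρ^{(2)}(x_2) = (1 + (D^{(12)}/D^{(22)}) r)/2 satisfies v^{(1)}_{12} = v^{(2)}_{12} = 0. -/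
import Mathlib


open Finset

/-- The velocity `v^{(i)}_{ικ}` on the two-point space; `ρ k l` denotes the vertex *mass*
`ρ^{(k)}(x_l)`, so that `∑_λ (ΔK) ρ^{(k)}_λ μ_λ = ∑_l (ΔK) ρ k l`. -/
noncomputable def vel2 {d : ℕ} (x : Fin 2 → EuclideanSpace ℝ (Fin d))
    (K : Fin 2 → Fin 2 → EuclideanSpace ℝ (Fin d) → EuclideanSpace ℝ (Fin d) → ℝ)
    (ρ : Fin 2 → Fin 2 → ℝ) (i ι κ : Fin 2) : ℝ :=
  ∑ k : Fin 2, ∑ l : Fin 2, (K i k (x ι) (x l) - K i k (x κ) (x l)) * ρ k l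

/-- A two-species distribution on the two-point space, in terms of the vertex masses. -/
def IsDist2 (ρ : Fin 2 → Fin 2 → ℝ) : Prop :=
  (∀ i ι, 0 ≤ ρ i ι) ∧ ∀ i, ρ i 0 + ρ i 1 = 1

/-- The family `ρ_{a_r}` of candidate stationary states (with `c = D^{(12)}/D^{(22)}`),
written in terms of the vertex masses. -/
noncomputable def rhoAR (r c : ℝ) : Fin 2 → Fin 2 → ℝ :=
  fun i ι =>
    if i = 0 then (if ι = 0 then (1 + r) / 2 else (1 - r) / 2)
    else (if ι = 0 then (1 - c * r) / 2 else (1 + c * r) / 2)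

/-- Proposition 3.6 a) (coupled case): existence of a distribution with vanishing
velocities; uniqueness (`= ρ_a`) when `D^{(11)}D^{(22)} ≠ (D^{(12)})²`; and the
one-parameter family `ρ_{a_r}` when `D^{(11)}D^{(22)} = (D^{(12)})²`. -/
theorem two_point_stationary_coupled_a
    (d : ℕ) (x : Fin 2 → EuclideanSpace ℝ (Fin d)) (hx : x 0 ≠ x 1)
    (μ : Fin 2 → ℝ) (hμ : ∀ ι, 0 < μ ι)
    (η12 : ℝ) (hη : 0 < η12)
    (K : Fin 2 → Fin 2 → EuclideanSpace ℝ (Fin d) → EuclideanSpace ℝ (Fin d) → ℝ)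
    (hKsym : ∀ i k p q, K i k p q = K i k q p)
    (hK12 : ∀ p q, K 0 1 p q = K 1 0 p q)
    (hKdiag : ∀ i k : Fin 2, ∀ p q : EuclideanSpace ℝ (Fin d), K i k p p = K i k q q)
    (D : Fin 2 → Fin 2 → ℝ)
    (hD : ∀ i k, D i k = K i k (x 0) (x 0) - K i k (x 0) (x 1))
    (hD12 : D 0 1 ≠ 0) :
    (∃ ρ, IsDist2 ρ ∧ vel2 x K ρ 0 0 1 = 0 ∧ vel2 x K ρ 1 0 1 = 0) ∧
    (D 0 0 * D 1 1 ≠ (D 0 1) ^ 2 →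
      ∀ ρ, IsDist2 ρ → vel2 x K ρ 0 0 1 = 0 → vel2 x K ρ 1 0 1 = 0 →
        ∀ i ι : Fin 2, ρ i ι = 1 / 2) ∧
    (D 0 0 * D 1 1 = (D 0 1) ^ 2 →
      D 1 1 ≠ 0 ∧
      ∀ r : ℝ, max (-1) (-|D 1 1 / D 0 1|) ≤ r → r ≤ min 1 |D 1 1 / D 0 1| →
        IsDist2 (rhoAR r (D 0 1 / D 1 1)) ∧
        vel2 x K (rhoAR r (D 0 1 / D 1 1)) 0 0 1 = 0 ∧
        vel2 x K (rhoAR r (D 0 1 / D 1 1)) 1 0 1 = 0) := by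

  -- velocity formula
  have hvel : ∀ ρ : Fin 2 → Fin 2 → ℝ, ∀ i : Fin 2,
      vel2 x K ρ i 0 1 = D i 0 * (ρ 0 0 - ρ 0 1) + D i 1 * (ρ 1 0 - ρ 1 1) := by
    intro ρ i
    simp only [vel2, Fin.sum_univ_two]
    rw [hKsym i 0 (x 1) (x 0), hKsym i 1 (x 1) (x 0),
        hKdiag i 0 (x 1) (x 0), hKdiag i 1 (x 1) (x 0), hD i 0, hD i 1]
    ring
  have hDsymm : D 1 0 = D 0 1 := by rw [hD 1 0, hD 0 1, hK12, hK12]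
  refine ⟨⟨fun _ _ => 1/2, ⟨fun _ _ => by norm_num, fun _ => by norm_num⟩,
      by rw [hvel]; ring, by rw [hvel]; ring⟩, ?_, ?_⟩
  · intro hdet ρ hρ h0 h1 i ι
    rw [hvel] at h0 h1
    rw [hDsymm] at h1
    have key : (D 0 0 * D 1 1 - D 0 1 ^ 2) * (ρ 0 0 - ρ 0 1) = 0 := by
      linear_combination D 1 1 * h0 - D 0 1 * h1
    have ha : ρ 0 0 - ρ 0 1 = 0 :=
      (mul_eq_zero.1 key).resolve_left (sub_ne_zero.2 hdet)
    have hb : ρ 1 0 - ρ 1 1 = 0 := by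
      have h4 : D 0 1 * (ρ 1 0 - ρ 1 1) = 0 := by
        rw [ha] at h0; linarith
      exact (mul_eq_zero.1 h4).resolve_left hD12
    have hsum := hρ.2 i
    fin_cases i <;> fin_cases ι <;> simp_all <;> linarith [hρ.2 0, hρ.2 1]
  · intro hdet
    have hD11 : D 1 1 ≠ 0 := by
      intro h
      apply hD12
      have h2 : D 0 1 ^ 2 = 0 := by rw [← hdet, h, mul_zero]
      exact pow_eq_zero_iff two_ne_zero |>.mp h2
    refine ⟨hD11, fun r hr1 hr2 => ?_⟩
    have habs : 0 < |D 1 1 / D 0 1| := abs_pos.2 (div_ne_zero hD11 hD12)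
    have hr1' : -1 ≤ r := le_trans (le_max_left _ _) hr1
    have hr1'' : -|D 1 1 / D 0 1| ≤ r := le_trans (le_max_right _ _) hr1
    have hr2' : r ≤ 1 := le_trans hr2 (min_le_left _ _)
    have hr2'' : r ≤ |D 1 1 / D 0 1| := le_trans hr2 (min_le_right _ _)
    set c := D 0 1 / D 1 1 with hc
    have hcr : |c * r| ≤ 1 := by
      have h1 : |r| ≤ |D 1 1 / D 0 1| := abs_le.2 ⟨hr1'', hr2''⟩
      have h2 : |c| * |D 1 1 / D 0 1| = 1 := by
        rw [← abs_mul]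
        have : c * (D 1 1 / D 0 1) = 1 := by rw [hc]; field_simp
        rw [this, abs_one]
      calc |c * r| = |c| * |r| := abs_mul _ _
        _ ≤ |c| * |D 1 1 / D 0 1| := by
            exact mul_le_mul_of_nonneg_left h1 (abs_nonneg _)
        _ = 1 := h2
    have hcr' := abs_le.1 hcr
    refine ⟨⟨?_, ?_⟩, ?_, ?_⟩
    · intro i ι
      fin_cases i <;> fin_cases ι <;> simp [rhoAR] <;> linarith [hcr'.1, hcr'.2]
    · intro i
      fin_cases i <;> simp [rhoAR] <;> ring
    · rw [hvel]
      simp only [rhoAR]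
      norm_num
      have : D 0 0 = D 0 1 ^ 2 / D 1 1 := by field_simp at hdet ⊢; linarith [hdet]
      rw [this, hc]
      field_simp
      ring
    · rw [hvel, hDsymm]
      simp only [rhoAR]
      norm_num
      rw [hc]
      field_simp
      ring
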